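/- arXiv:2109.06683 — 3 statements merged into one kernel-verified Lean document; each statement's English description precedes it below -/
import Mathlib

section
/- Assume Q satisfies (H) and let N ≥ 1, M > 0. Then there exists a constant C ≥ 0 such that for every measurable u : ℝ^N → ℝ with u ≥ 0 a.e., u integrable, and ∫ u = M, the negative part of Q∘u is integrable with ∫ max(−Q(u(x)), 0) dx ≤ C; in particular ∫ Q(u) ≥ −C whenever Q∘u is integrable. -/
open MeasureTheory Filter Set

noncomputable section

/-- Euclidean space `ℝ^N`. -/
abbrev Euc (N : ℕ) := EuclideanSpace ℝ (Fin N)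

/-- Hypothesis (H): `Q` is continuous on `(0,∞)`, vanishes on `(-∞,0]`, is bounded below,
and `Q(s) ~ A·s^(1-m)` as `s → 0⁺`. -/
def HypH (Q : ℝ → ℝ) (A m : ℝ) : Prop :=
  ContinuousOn Q (Set.Ioi 0) ∧ (∀ s : ℝ, s ≤ 0 → Q s = 0) ∧ BddBelow (Set.range Q) ∧
  0 < A ∧ 1 < m ∧
  Filter.Tendsto (fun s : ℝ => Q s / (A * s ^ (1 - m))) (nhdsWithin 0 (Set.Ioi 0)) (nhds 1)

/-- `g` is the weak gradient of `u`. -/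
def IsWeakGradient (N : ℕ) (u : Euc N → ℝ) (g : Euc N → Euc N) : Prop :=
  ∀ φ : Euc N → ℝ, ContDiff ℝ (⊤ : ℕ∞) φ → HasCompactSupport φ →
    ∀ i : Fin N, (∫ x, u x * fderiv ℝ φ x (EuclideanSpace.single i 1)) =
      - ∫ x, g x i * φ x

/-- `u ∈ H¹(ℝ^N)` with weak gradient `g`. -/
def MemH1 (N : ℕ) (u : Euc N → ℝ) (g : Euc N → Euc N) : Prop :=
  MeasureTheory.MemLp u 2 MeasureTheory.volume ∧
  MeasureTheory.MemLp g 2 MeasureTheory.volume ∧ IsWeakGradient N u g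

/-- `u ∈ D_M` (with weak gradient `g`): `u ∈ H¹`, `u ≥ 0` a.e., `∫ u = M`. -/
def InD (N : ℕ) (M : ℝ) (u : Euc N → ℝ) (g : Euc N → Euc N) : Prop :=
  MemH1 N u g ∧ (∀ᵐ x : Euc N, 0 ≤ u x) ∧ (∫ x, u x) = M

/-- The energy `E[u] = ∫ (½|∇u|² + Q(u))`. -/
def Energy (N : ℕ) (Q : ℝ → ℝ) (u : Euc N → ℝ) (g : Euc N → Euc N) : ℝ :=
  ∫ x, ((1/2) * ‖g x‖^2 + Q (u x))

/-- `u` is a (global) minimizer of `E` in `D_M`. -/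
def IsMinimizer (N : ℕ) (Q : ℝ → ℝ) (M : ℝ) (u : Euc N → ℝ) : Prop :=
  ∃ g, InD N M u g ∧ MeasureTheory.Integrable (fun x => Q (u x)) ∧
    ∀ v h, InD N M v h → MeasureTheory.Integrable (fun x => Q (v x)) →
      Energy N Q u g ≤ Energy N Q v h

/-- `u` is radially symmetric w.r.t. `x₀` with non-increasing radial profile. -/
def IsRadialNonincreasing (N : ℕ) (u : Euc N → ℝ) (x₀ : Euc N) : Prop :=
  ∃ v : ℝ → ℝ, AntitoneOn v (Set.Ici 0) ∧ ∀ x, u x = v ‖x - x₀‖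
/-- Uniform lower bound on the potential energy: under (H), there is `C ≥ 0` such that
for every nonnegative integrable `u` with `∫ u = M`, the negative part of `Q∘u` is
integrable with integral at most `C`; in particular `∫ Q(u) ≥ -C` when `Q∘u` is integrable. -/
theorem stmt1 (N : ℕ) (hN : 1 ≤ N) (Q : ℝ → ℝ) (A m : ℝ) (hQ : HypH Q A m)
    (M : ℝ) (hM : 0 < M) :
    ∃ C : ℝ, 0 ≤ C ∧ ∀ u : Euc N → ℝ, Measurable u → (∀ᵐ x : Euc N, 0 ≤ u x) →
      MeasureTheory.Integrable u → (∫ x, u x) = M →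
        MeasureTheory.Integrable (fun x => max (-(Q (u x))) 0) ∧
        (∫ x, max (-(Q (u x))) 0) ≤ C ∧
        (MeasureTheory.Integrable (fun x => Q (u x)) → -C ≤ ∫ x, Q (u x)) := by
  classical
  obtain ⟨hQc, hQ0, hQbdd, hA, hm, htend⟩ := hQ
  -- lower bound for Q
  obtain ⟨b, hb⟩ := hQbdd
  have hbQ : ∀ s, b ≤ Q s := fun s => hb (Set.mem_range_self s)
  set B : ℝ := max (-b) 0 with hB
  have hB0 : 0 ≤ B := le_max_right _ _
  have hnegQ : ∀ s, -(Q s) ≤ B := fun s =>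
    le_max_of_le_left (neg_le_neg (hbQ s))
  -- Q is measurable
  have hQmeas : Measurable Q := by
    have : Q = (Set.Ioi (0:ℝ)).piecewise Q (fun _ => 0) := by
      funext s
      by_cases hs : s ∈ Set.Ioi (0:ℝ)
      · simp [Set.piecewise, hs]
      · simp only [Set.piecewise, hs, if_false]
        exact hQ0 s (le_of_not_gt hs)
    rw [this]
    exact ContinuousOn.measurable_piecewise hQc continuousOn_const measurableSet_Ioi
  -- near 0, Q is positive
  have hev : ∀ᶠ s in nhdsWithin 0 (Set.Ioi 0),
      (1/2 : ℝ) < Q s / (A * s ^ (1 - m)) :=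
    htend.eventually (eventually_gt_nhds (by norm_num))
  obtain ⟨δ, hδmem, hδ⟩ := mem_nhdsGT_iff_exists_Ioo_subset.1 hev
  have hδ0 : 0 < δ := hδmem
  have hQpos : ∀ s, 0 < s → s < δ → 0 < Q s := by
    intro s hs hsδ
    have h1 : (1/2 : ℝ) < Q s / (A * s ^ (1 - m)) := hδ ⟨hs, hsδ⟩
    have hpos : 0 < A * s ^ (1 - m) := mul_pos hA (Real.rpow_pos_of_pos hs _)
    by_contra h
    push_neg at h
    have : Q s / (A * s ^ (1 - m)) ≤ 0 := div_nonpos_of_nonpos_of_nonneg h hpos.le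
    linarith
  have hQnonneg : ∀ s, s < δ → 0 ≤ Q s := by
    intro s hs
    rcases le_or_gt s 0 with h | h
    · rw [hQ0 s h]
    · exact (hQpos s h hs).le
  refine ⟨B * (M / δ), mul_nonneg hB0 (div_nonneg hM.le hδ0.le), ?_⟩
  intro u hu hu0 huint huM
  set S : Set (Euc N) := {x | δ ≤ u x} with hS
  have hSmeas : MeasurableSet S := hu measurableSet_Ici
  have hSfin : volume S < ⊤ := huint.measure_ge_lt_top hδ0
  have hSbound : (volume S).toReal ≤ M / δ := by
    have := mul_meas_ge_le_integral_of_nonneg hu0 huint δ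
    rw [huM] at this
    rw [le_div_iff₀ hδ0]
    change δ * (volume S).toReal ≤ M at this
    linarith [this]
  set f : Euc N → ℝ := fun x => max (-(Q (u x))) 0 with hf
  have hfmeas : Measurable f :=
    ((hQmeas.comp hu).neg).max measurable_const
  have hfle : ∀ x, f x ≤ S.indicator (fun _ => B) x := by
    intro x
    by_cases hx : x ∈ S
    · rw [Set.indicator_of_mem hx]
      exact max_le (hnegQ _) hB0
    · rw [Set.indicator_of_notMem hx]
      have : u x < δ := lt_of_not_ge hx
      have := hQnonneg (u x) this
      simp [hf, this, neg_nonpos_of_nonneg this]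
  have hfnonneg : ∀ x, 0 ≤ f x := fun x => le_max_right _ _
  have hindint : Integrable (S.indicator (fun _ => B)) volume := by
    rw [integrable_indicator_iff hSmeas]
    exact integrableOn_const hSfin.ne
  have hfint : Integrable f volume := by
    refine hindint.mono' hfmeas.aestronglyMeasurable ?_
    filter_upwards with x
    rw [Real.norm_eq_abs, abs_of_nonneg (hfnonneg x)]
    exact hfle x
  have hfbound : (∫ x, f x) ≤ B * (M / δ) := by
    have h1 : (∫ x, f x) ≤ ∫ x, S.indicator (fun _ => B) x :=
      integral_mono hfint hindint hfle
    have h2 : (∫ x, S.indicator (fun _ => B) x) = B * (volume S).toReal := by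
      rw [integral_indicator hSmeas, setIntegral_const, smul_eq_mul, mul_comm]
      rfl
    calc (∫ x, f x) ≤ B * (volume S).toReal := h1.trans_eq h2
      _ ≤ B * (M / δ) := mul_le_mul_of_nonneg_left hSbound hB0
  refine ⟨hfint, hfbound, ?_⟩
  intro hQint
  have h3 : ∀ x, -f x ≤ Q (u x) := by
    intro x
    have : -(Q (u x)) ≤ f x := le_max_left _ _
    linarith
  have h4 : (∫ x, -f x) ≤ ∫ x, Q (u x) := integral_mono hfint.neg hQint h3
  rw [integral_neg] at h4
  linarith
end
end

section
/- Assume Q satisfies (H) and let N ≥ 1. Let u : ℝ^N → [0,∞) be radially symmetric with respect to some x₀ ∈ ℝ^N with non-increasing radial profile, and suppose u is integrable on ℝ^N and Q∘u is integrable on ℝ^N. Then u has compact support. -/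
open MeasureTheory Filter Set

noncomputable section

/-- Any radially non-increasing, nonnegative function which is integrable and has
integrable potential energy has compact support. -/
theorem stmt2 (N : ℕ) (hN : 1 ≤ N) (Q : ℝ → ℝ) (A m : ℝ) (hQ : HypH Q A m)
    (u : Euc N → ℝ) (x₀ : Euc N) (hpos : ∀ x, 0 ≤ u x)
    (hrad : IsRadialNonincreasing N u x₀)
    (hint : MeasureTheory.Integrable u)
    (hQint : MeasureTheory.Integrable (fun x => Q (u x))) :
    HasCompactSupport u := by
  obtain ⟨v, hvmono, hvu⟩ := hrad
  obtain ⟨hQcont, hQzero, hQbdd, hA, hm, htend⟩ := hQ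
  haveI : Nonempty (Fin N) := ⟨⟨0, hN⟩⟩
  haveI : Nontrivial (Euc N) := inferInstance
  have hvnorm : ∀ x : Euc N, ‖x - x₀‖ ∈ Set.Ici (0:ℝ) := fun x => norm_nonneg _
  by_cases hzero : ∃ r₀ ∈ Set.Ici (0:ℝ), v r₀ ≤ 0
  · -- u vanishes outside a ball
    obtain ⟨r₀, hr₀, hvr₀⟩ := hzero
    refine HasCompactSupport.intro (isCompact_closedBall x₀ r₀) (fun x hx => ?_)
    have hxr : r₀ ≤ ‖x - x₀‖ := by
      simp only [Metric.mem_closedBall, dist_eq_norm] at hx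
      linarith [not_le.mp hx]
    have h1 : u x ≤ 0 := by
      rw [hvu x]
      exact le_trans (hvmono hr₀ (hvnorm x) hxr) hvr₀
    linarith [hpos x]
  · -- v is everywhere positive
    push_neg at hzero
    exfalso
    -- get δ from the asymptotics
    have hev : ∀ᶠ s in nhdsWithin 0 (Set.Ioi 0),
        (1:ℝ)/2 ≤ Q s / (A * s ^ (1 - m)) :=
      htend.eventually (eventually_ge_nhds (by norm_num))
    rw [eventually_nhdsWithin_iff] at hev
    obtain ⟨t, hts, ht⟩ := eventually_nhds_iff.mp hev
    obtain ⟨δ₀, hδ₀, hδball⟩ := Metric.isOpen_iff.mp ht.1 0 ht.2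
    set δ : ℝ := min δ₀ 1 with hδdef
    have hδpos : 0 < δ := lt_min hδ₀ one_pos
    have hQlb : ∀ s : ℝ, 0 < s → s < δ → A / 2 ≤ Q s := by
      intro s hs hsδ
      have hsb : s ∈ Metric.ball (0:ℝ) δ₀ := by
        simp only [Metric.mem_ball, Real.dist_eq, sub_zero, abs_of_pos hs]
        exact lt_of_lt_of_le hsδ (min_le_left _ _)
      have hratio : (1:ℝ)/2 ≤ Q s / (A * s ^ (1 - m)) := hts s (hδball hsb) hs
      have hspow : (1:ℝ) ≤ s ^ (1 - m) :=
        Real.one_le_rpow_of_pos_of_le_one_of_nonpos hs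
          (le_of_lt (lt_of_lt_of_le hsδ (min_le_right _ _))) (by linarith)
      have hden : 0 < A * s ^ (1 - m) :=
        mul_pos hA (Real.rpow_pos_of_pos hs _)
      have h1 : A * s ^ (1 - m) / 2 ≤ Q s := by
        rw [le_div_iff₀ hden] at hratio
        linarith [hratio]
      have h2 : A / 2 ≤ A * s ^ (1 - m) / 2 := by
        have := mul_le_mul_of_nonneg_left hspow (le_of_lt hA)
        linarith
      linarith
    -- find R with v R < δ
    have hvlt : ∃ R : ℝ, 0 ≤ R ∧ v R < δ := by
      by_contra hcon
      push_neg at hcon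
      have hsub : (Set.univ : Set (Euc N)) ⊆ {x | δ ≤ u x} := by
        intro x _
        have := hcon ‖x - x₀‖ (norm_nonneg _)
        simpa [hvu x] using this
      have hfin : volume {x : Euc N | δ ≤ u x} < ⊤ :=
        hint.measure_ge_lt_top hδpos
      have := measure_mono (μ := (volume : Measure (Euc N))) hsub
      rw [MeasureTheory.measure_univ_of_isAddLeftInvariant (volume : Measure (Euc N))] at this
      exact lt_irrefl ⊤ (lt_of_le_of_lt this hfin)
    obtain ⟨R, hR0, hvR⟩ := hvlt
    -- outside the ball of radius R, Q(u x) ≥ A/2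
    have hout : ∀ x : Euc N, x ∉ Metric.closedBall x₀ R → A / 2 ≤ Q (u x) := by
      intro x hx
      have hxr : R ≤ ‖x - x₀‖ := by
        simp only [Metric.mem_closedBall, dist_eq_norm] at hx
        linarith [not_le.mp hx]
      have h1 : v ‖x - x₀‖ ≤ v R := hvmono (Set.mem_Ici.mpr hR0) (hvnorm x) hxr
      have h2 : 0 < v ‖x - x₀‖ := hzero _ (hvnorm x)
      rw [hvu x]
      exact hQlb _ h2 (lt_of_le_of_lt h1 hvR)
    have hsub : (Metric.closedBall x₀ R)ᶜ ⊆ {x : Euc N | A / 2 ≤ Q (u x)} :=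
      fun x hx => hout x hx
    have hfin : volume {x : Euc N | A / 2 ≤ Q (u x)} < ⊤ :=
      hQint.measure_ge_lt_top (by linarith)
    have hcompl : volume ((Metric.closedBall x₀ R)ᶜ : Set (Euc N)) = ⊤ := by
      by_contra hne
      have h1 : volume (Set.univ : Set (Euc N)) ≤
          volume (Metric.closedBall x₀ R) + volume ((Metric.closedBall x₀ R)ᶜ) := by
        rw [← Set.union_compl_self (Metric.closedBall x₀ R)]
        exact measure_union_le _ _
      rw [MeasureTheory.measure_univ_of_isAddLeftInvariant (volume : Measure (Euc N))] at h1
      have h2 : volume (Metric.closedBall x₀ R) +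
          volume ((Metric.closedBall x₀ R)ᶜ) < ⊤ :=
        ENNReal.add_lt_top.mpr ⟨measure_closedBall_lt_top, lt_top_iff_ne_top.mpr hne⟩
      exact lt_irrefl ⊤ (lt_of_le_of_lt h1 h2)
    have := measure_mono (μ := (volume : Measure (Euc N))) hsub
    rw [hcompl] at this
    exact lt_irrefl ⊤ (lt_of_le_of_lt this hfin)
end
end

section
/- Assume Q satisfies (H-EL1); if N ≥ 2 assume additionally (H2). Let u be a minimizer of E in D_M which is radially symmetric w.r.t. x₀ ∈ ℝ^N with non-increasing radial profile, and let supp u be the closed ball of radius r̄ about x₀ (0 < r̄ < ∞). Then there exists λ ∈ ℝ such that ∫ ∇u·∇φ + ∫ Q'(u)·φ = λ·∫ φ for every C¹ function φ : ℝ^N → ℝ whose support is a compact subset of the open ball B_r̄(x₀). -/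
open MeasureTheory Filter Set

set_option maxHeartbeats 1000000
noncomputable section

/-- `Q` is C¹ on `(0,∞)`. -/
def HypC1 (Q : ℝ → ℝ) : Prop :=
  (∀ s : ℝ, 0 < s → DifferentiableAt ℝ Q s) ∧ ContinuousOn (deriv Q) (Set.Ioi 0)

/-- Hypothesis (H-EL1): (H) with `1 < m < 3` and `Q` of class C¹ on `(0,∞)`. -/
def HypHEL1 (Q : ℝ → ℝ) (A m : ℝ) : Prop := HypH Q A m ∧ m < 3 ∧ HypC1 Q

/-- Hypothesis (H2) (needed for `N ≥ 2`): `(Q')₋ ≤ C` and `(Q')₊ ≤ C·s^q` for large `s`,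
with `q` arbitrary (finite) if `N = 2` and `q ≤ 2N/(N-2)` if `N ≥ 3`. -/
def HypH2 (N : ℕ) (Q : ℝ → ℝ) : Prop :=
  ∃ C > (0:ℝ), ∃ q : ℝ, (3 ≤ N → q ≤ 2 * (N:ℝ) / ((N:ℝ) - 2)) ∧
    ∃ s₁ : ℝ, ∀ s : ℝ, s₁ ≤ s →
      max (-(deriv Q s)) 0 ≤ C ∧ max (deriv Q s) 0 ≤ C * s ^ q


theorem l2mul {X : Type*} [MeasurableSpace X] {μ : Measure X} {f g : X → ℝ}
    (hf : MemLp f 2 μ) (hg : MemLp g 2 μ) : Integrable (fun x => f x * g x) μ := by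
  have h1 : Integrable (fun x => (1/2) * (‖f x‖^2 + ‖g x‖^2)) μ :=
    (((memLp_two_iff_integrable_sq_norm hf.1).1 hf).add
      ((memLp_two_iff_integrable_sq_norm hg.1).1 hg)).const_mul _
  refine h1.mono' (hf.1.mul hg.1) ?_
  filter_upwards with x
  rw [Real.norm_eq_abs, abs_mul, Real.norm_eq_abs, Real.norm_eq_abs]
  nlinarith [sq_nonneg (|f x| - |g x|), abs_nonneg (f x), abs_nonneg (g x), sq_abs (f x),
    sq_abs (g x)]

theorem l2inner {X : Type*} [MeasurableSpace X] {μ : Measure X} {N : ℕ} {f g : X → Euc N}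
    (hf : MemLp f 2 μ) (hg : MemLp g 2 μ) : Integrable (fun x => (inner ℝ (f x) (g x) : ℝ)) μ := by
  have h1 : Integrable (fun x => (1/2) * (‖f x‖^2 + ‖g x‖^2)) μ :=
    (((memLp_two_iff_integrable_sq_norm hf.1).1 hf).add
      ((memLp_two_iff_integrable_sq_norm hg.1).1 hg)).const_mul _
  refine h1.mono' (hf.1.inner hg.1) ?_
  filter_upwards with x
  rw [Real.norm_eq_abs]
  have h2 := abs_real_inner_le_norm (f x) (g x)
  nlinarith [sq_nonneg (‖f x‖ - ‖g x‖), norm_nonneg (f x), norm_nonneg (g x)]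

theorem myIBP (N : ℕ) (φ ψ : Euc N → ℝ) (hφ : ContDiff ℝ 1 φ) (hψ : ContDiff ℝ (⊤ : ℕ∞) ψ)
    (hφc : HasCompactSupport φ) (v : Euc N) :
    ∫ x, φ x * fderiv ℝ ψ x v = - ∫ x, fderiv ℝ φ x v * ψ x := by
  have h1 : Continuous (fun x => fderiv ℝ φ x) := hφ.continuous_fderiv one_ne_zero
  have h2 : Continuous (fun x => fderiv ℝ ψ x) := hψ.continuous_fderiv (by simp)
  refine integral_mul_fderiv_eq_neg_fderiv_mul_of_integrable ?_ ?_ ?_ ?_ ?_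
  · exact (((h1.clm_apply continuous_const).mul hψ.continuous).integrable_of_hasCompactSupport
      ((hφc.fderiv_apply ℝ v).mul_right))
  · exact ((hφ.continuous.mul (h2.clm_apply continuous_const)).integrable_of_hasCompactSupport
      (hφc.mul_right))
  · exact ((hφ.continuous.mul hψ.continuous).integrable_of_hasCompactSupport hφc.mul_right)
  · exact fun x _ => hφ.differentiable one_ne_zero x
  · exact fun x _ => hψ.differentiable (by simp) x

theorem myslope (f : ℝ → ℝ) (f' : ℝ) (h : HasDerivAt f f' 0) (s : ℕ → ℝ)
    (hs : Tendsto s atTop (nhds 0))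
    (hne : ∀ n, s n ≠ 0) : Tendsto (fun n => (f (s n) - f 0) / s n) atTop (nhds f') := by
  have h2 := hasDerivAt_iff_tendsto_slope.1 h
  have h3 : Tendsto s atTop (nhdsWithin 0 {(0:ℝ)}ᶜ) :=
    tendsto_nhdsWithin_of_tendsto_nhds_of_eventually_within s hs
      (Eventually.of_forall fun n => hne n)
  have h4 := h2.comp h3
  simp only [Function.comp_def, slope_def_field] at h4
  simpa [div_eq_inv_mul] using h4

theorem bdd_bound_integrable {N : ℕ} {f φ : Euc N → ℝ} {C : ℝ}
    (hm : AEStronglyMeasurable f (volume : Measure (Euc N)))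
    (hφc : Continuous φ) (hφs : HasCompactSupport φ)
    (hb : ∀ x, ‖f x‖ ≤ C * |φ x|) : Integrable f := by
  refine Integrable.mono' ?_ hm (Eventually.of_forall hb)
  exact (hφc.abs.integrable_of_hasCompactSupport hφs.abs).const_mul C

/-- auxiliary: a bound for a continuous compactly supported function -/
theorem cpt_bound {N : ℕ} (f : Euc N → ℝ) (hc : Continuous f) (hs : HasCompactSupport f) :
    ∃ C : ℝ, 0 < C ∧ ∀ x, |f x| ≤ C := by
  obtain ⟨x, hx⟩ := hc.norm.exists_forall_ge_of_hasCompactSupport hs.norm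
  exact ⟨max ‖f x‖ 1, lt_of_lt_of_le one_pos (le_max_right _ _),
    fun y => le_trans (hx y) (le_max_left _ _)⟩

/-- Integrability of `deriv Q (u x) * φ x` for `φ` supported where `u ≥ δ > 0`. -/
theorem derivQ_mul_integrable {N : ℕ} {Q : ℝ → ℝ} {u : Euc N → ℝ} {φ : Euc N → ℝ} {δ B : ℝ}
    (hQdc : ContinuousOn (deriv Q) (Set.Ioi 0))
    (hu : AEStronglyMeasurable u (volume : Measure (Euc N)))
    (hδ : 0 < δ) (hδB : δ ≤ B) (hub : ∀ x, u x ≤ B)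
    (hφc : Continuous φ) (hφs : HasCompactSupport φ)
    (hlb : ∀ x ∈ tsupport φ, δ ≤ u x) :
    Integrable (fun x => deriv Q (u x) * φ x) := by
  set P : ℝ → ℝ := fun s => deriv Q (max s δ) with hP
  have hPc : Continuous P :=
    hQdc.comp_continuous (continuous_id.max continuous_const)
      (fun x => lt_of_lt_of_le hδ (le_max_right _ _))
  have heq : ∀ x, deriv Q (u x) * φ x = P (u x) * φ x := by
    intro x
    by_cases hx : φ x = 0
    · simp [hx]
    · have hxs : x ∈ tsupport φ := subset_closure (by simpa [Function.mem_support] using hx)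
      rw [hP]; simp only []
      rw [max_eq_left (hlb x hxs)]
  obtain ⟨C, hC⟩ := (isCompact_Icc (a := δ) (b := B)).exists_bound_of_continuousOn
    (hQdc.mono (fun y hy => lt_of_lt_of_le hδ hy.1))
  have hPb : ∀ x, |P (u x)| ≤ C := by
    intro x
    have : max (u x) δ ∈ Icc δ B := ⟨le_max_right _ _, max_le (hub x) hδB⟩
    simpa [Real.norm_eq_abs] using hC _ this
  rw [funext heq]
  refine bdd_bound_integrable (C := C) ((hPc.comp_aestronglyMeasurable hu).mul
    hφc.aestronglyMeasurable) hφc hφs ?_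
  intro x
  rw [Real.norm_eq_abs, abs_mul]
  refine mul_le_mul_of_nonneg_right (hPb x) (abs_nonneg _)

theorem core (N : ℕ) (Q : ℝ → ℝ) (M : ℝ) (u : Euc N → ℝ) (g : Euc N → Euc N)
    (hQd : ∀ s : ℝ, 0 < s → DifferentiableAt ℝ Q s)
    (hQdc : ContinuousOn (deriv Q) (Set.Ioi 0))
    (hQc : ContinuousOn Q (Set.Ioi 0))
    (hu2 : MemLp u 2 (volume : Measure (Euc N)))
    (hg2 : MemLp g 2 (volume : Measure (Euc N)))
    (hwg : IsWeakGradient N u g)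
    (hae : ∀ᵐ x : Euc N, 0 ≤ u x)
    (hupos : ∀ x, 0 ≤ u x) (huint : Integrable u (volume : Measure (Euc N)))
    (hM : (∫ x, u x) = M)
    (hQint : Integrable (fun x => Q (u x)) (volume : Measure (Euc N)))
    (hmin : ∀ v h, InD N M v h → Integrable (fun x => Q (v x)) →
      Energy N Q u g ≤ Energy N Q v h)
    (δ B : ℝ) (hδ : 0 < δ) (hδB : δ ≤ B) (hub : ∀ x, u x ≤ B)
    (φ : Euc N → ℝ) (hφ1 : ContDiff ℝ 1 φ) (hφc : HasCompactSupport φ)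
    (hlb : ∀ x ∈ tsupport φ, δ ≤ u x)
    (hφ0 : (∫ x, φ x) = 0) :
    (∫ x, (inner ℝ (g x) (gradient φ x) : ℝ)) + (∫ x, deriv Q (u x) * φ x) = 0 := by
  classical
  -- the gradient of φ
  set G : Euc N → Euc N := fun x => gradient φ x with hG
  have hGdef : G = fun x => (InnerProductSpace.toDual ℝ (Euc N)).symm (fderiv ℝ φ x) := by
    funext x; rfl
  have hGcont : Continuous G := by
    rw [hGdef]
    exact (LinearIsometryEquiv.continuous _).comp (hφ1.continuous_fderiv one_ne_zero)
  have hGsupp : HasCompactSupport G := by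
    rw [hGdef]
    exact (hφc.fderiv ℝ).comp_left (by simp)
  have hG2 : MemLp G 2 (volume : Measure (Euc N)) :=
    hGcont.memLp_of_hasCompactSupport hGsupp
  have hGi : ∀ x i, G x i = fderiv ℝ φ x (EuclideanSpace.single i 1) := by
    intro x i
    have h1 : G x i = (inner ℝ (G x) (EuclideanSpace.single i (1:ℝ)) : ℝ) := by
      rw [EuclideanSpace.inner_single_right]; simp
    rw [h1]
    exact InnerProductSpace.toDual_symm_apply
  have hφcont : Continuous φ := hφ1.continuous
  have hφ2 : MemLp φ 2 (volume : Measure (Euc N)) := hφcont.memLp_of_hasCompactSupport hφc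
  have hφint : Integrable φ (volume : Measure (Euc N)) :=
    hφcont.integrable_of_hasCompactSupport hφc
  -- numbers
  set a : ℝ := ∫ x, (inner ℝ (g x) (G x) : ℝ) with ha
  set c : ℝ := ∫ x, deriv Q (u x) * φ x with hc
  have hai : Integrable (fun x => (inner ℝ (g x) (G x) : ℝ)) := l2inner hg2 hG2
  have hbint : Integrable (fun x => (1/2) * ‖G x‖^2) :=
    ((memLp_two_iff_integrable_sq_norm hG2.1).1 hG2).const_mul _
  set b : ℝ := ∫ x, (1/2) * ‖G x‖^2 with hb
  have hgsq : Integrable (fun x => (1/2) * ‖g x‖^2) :=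
    ((memLp_two_iff_integrable_sq_norm hg2.1).1 hg2).const_mul _
  have hE0 : Integrable (fun x => (1/2) * ‖g x‖^2 + Q (u x)) := hgsq.add hQint
  -- bound on φ
  obtain ⟨Cφ, hCφpos, hCφ⟩ := cpt_bound φ hφcont hφc
  set ε₀ : ℝ := δ / (2 * Cφ) with hε₀def
  have hε₀ : 0 < ε₀ := div_pos hδ (by linarith)
  have hsmall : ∀ ε : ℝ, |ε| ≤ ε₀ → ∀ x, |ε * φ x| ≤ δ / 2 := by
    intro ε hε x
    rw [abs_mul]
    calc |ε| * |φ x| ≤ ε₀ * Cφ := by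
          apply mul_le_mul hε (hCφ x) (abs_nonneg _) (le_of_lt hε₀)
      _ = δ / 2 := by rw [hε₀def]; field_simp
  -- truncated Q
  set Qt : ℝ → ℝ := fun s => Q (max s (δ/4)) with hQt
  have hQtc : Continuous Qt :=
    hQc.comp_continuous (continuous_id.max continuous_const)
      (fun x => lt_of_lt_of_le (show (0:ℝ) < δ/4 by linarith) (le_max_right _ _))
  have hQteq : ∀ s : ℝ, δ/4 ≤ s → Qt s = Q s := by
    intro s hs; rw [hQt]; simp only []; rw [max_eq_left hs]
  have hQtd : ∀ s : ℝ, δ/2 ≤ s → HasDerivAt Qt (deriv Q s) s := by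
    intro s hs
    have h1 : HasDerivAt Q (deriv Q s) s := (hQd s (by linarith)).hasDerivAt
    apply h1.congr_of_eventuallyEq
    filter_upwards [Ioi_mem_nhds (show δ/4 < s by linarith)] with t ht
    exact hQteq t (le_of_lt ht)
  -- derivative bound
  obtain ⟨C₀', hC₀'⟩ := (isCompact_Icc (a := δ/2) (b := B + δ/2)).exists_bound_of_continuousOn
    (hQdc.mono (fun y hy => lt_of_lt_of_le (by linarith) hy.1))
  set C₀ : ℝ := max C₀' 0 with hC₀def
  have hC₀nn : 0 ≤ C₀ := le_max_right _ _
  have hC₀ : ∀ y ∈ Icc (δ/2) (B + δ/2), |deriv Q y| ≤ C₀ := by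
    intro y hy
    exact le_trans (by simpa [Real.norm_eq_abs] using hC₀' y hy) (le_max_left _ _)
  have hlip : ∀ y ∈ Icc (δ/2) (B + δ/2), ∀ z ∈ Icc (δ/2) (B + δ/2),
      |Qt z - Qt y| ≤ C₀ * |z - y| := by
    intro y hy z hz
    have := (convex_Icc (δ/2) (B + δ/2)).norm_image_sub_le_of_norm_hasDerivWithin_le
      (f := Qt) (f' := deriv Q) (fun s hs => (hQtd s hs.1).hasDerivWithinAt)
      (fun s hs => by simpa [Real.norm_eq_abs] using hC₀ s hs) hy hz
    simpa [Real.norm_eq_abs] using this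
  -- memberships
  have hmemIcc : ∀ x ∈ tsupport φ, u x ∈ Icc (δ/2) (B + δ/2) := by
    intro x hx
    exact ⟨by linarith [hlb x hx], by linarith [hub x]⟩
  have hmemIcc' : ∀ ε : ℝ, |ε| ≤ ε₀ → ∀ x ∈ tsupport φ,
      u x + ε * φ x ∈ Icc (δ/2) (B + δ/2) := by
    intro ε hε x hx
    have h1 := hsmall ε hε x
    have h2 := abs_le.1 h1
    exact ⟨by linarith [hlb x hx], by linarith [hub x]⟩
  -- the increment of Q
  set ΔQ : ℝ → Euc N → ℝ := fun ε =>
    Set.indicator (tsupport φ) (fun x => Qt (u x + ε * φ x) - Qt (u x)) with hΔQ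
  have hΔeq : ∀ ε : ℝ, |ε| ≤ ε₀ → ∀ x, Q (u x + ε * φ x) = Q (u x) + ΔQ ε x := by
    intro ε hε x
    by_cases hx : x ∈ tsupport φ
    · rw [hΔQ]; simp only [Set.indicator_of_mem hx]
      rw [hQteq _ (by linarith [(hmemIcc' ε hε x hx).1]),
        hQteq _ (by linarith [(hmemIcc x hx).1])]
      ring
    · have hφx : φ x = 0 := image_eq_zero_of_notMem_tsupport hx
      rw [hΔQ]; simp [Set.indicator_of_notMem hx, hφx]
  have hΔbound : ∀ ε : ℝ, |ε| ≤ ε₀ → ∀ x, |ΔQ ε x| ≤ C₀ * |ε| * |φ x| := by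
    intro ε hε x
    by_cases hx : x ∈ tsupport φ
    · rw [hΔQ]; simp only [Set.indicator_of_mem hx]
      have := hlip (u x) (hmemIcc x hx) (u x + ε * φ x) (hmemIcc' ε hε x hx)
      calc |Qt (u x + ε * φ x) - Qt (u x)| ≤ C₀ * |u x + ε * φ x - u x| := this
        _ = C₀ * |ε| * |φ x| := by rw [add_sub_cancel_left, abs_mul]; ring
    · rw [hΔQ]; simp only [Set.indicator_of_notMem hx, abs_zero]
      positivity
  have hΔmeas : ∀ ε : ℝ, AEStronglyMeasurable (ΔQ ε) (volume : Measure (Euc N)) := by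
    intro ε
    refine AEStronglyMeasurable.indicator ?_ (isClosed_tsupport φ).measurableSet
    exact ((hQtc.comp_aestronglyMeasurable
        (hu2.1.add (hφcont.aestronglyMeasurable.const_mul ε))).sub
      (hQtc.comp_aestronglyMeasurable hu2.1))
  have hΔint : ∀ ε : ℝ, |ε| ≤ ε₀ → Integrable (ΔQ ε) (volume : Measure (Euc N)) := by
    intro ε hε
    refine bdd_bound_integrable (C := C₀ * |ε|) (hΔmeas ε) hφcont hφc ?_
    intro x
    rw [Real.norm_eq_abs]
    calc |ΔQ ε x| ≤ C₀ * |ε| * |φ x| := hΔbound ε hε x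
      _ = C₀ * |ε| * |φ x| := rfl
  -- the competitor
  have hkey : ∀ ε : ℝ, |ε| ≤ ε₀ → 0 ≤ ε * a + (ε^2 * b + ∫ x, ΔQ ε x) := by
    intro ε hε
    set vε : Euc N → ℝ := fun x => u x + ε * φ x with hvε
    set hε' : Euc N → Euc N := fun x => g x + ε • G x with hhε
    have hv2 : MemLp vε 2 (volume : Measure (Euc N)) := hu2.add (hφ2.const_mul ε)
    have hh2 : MemLp hε' 2 (volume : Measure (Euc N)) := hg2.add (hG2.const_smul ε)
    have hvint : Integrable vε := huint.add (hφint.const_mul ε)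
    -- weak gradient
    have hwg' : IsWeakGradient N vε hε' := by
      intro ψ hψ hψc i
      have hdc : Continuous (fun x => fderiv ℝ ψ x) := hψ.continuous_fderiv (by simp)
      have hdci : Continuous (fun x => fderiv ℝ ψ x (EuclideanSpace.single i 1)) :=
        hdc.clm_apply continuous_const
      have hdsupp : HasCompactSupport (fun x => fderiv ℝ ψ x (EuclideanSpace.single i 1)) :=
        hψc.fderiv_apply ℝ _
      have hd2 : MemLp (fun x => fderiv ℝ ψ x (EuclideanSpace.single i 1)) 2
          (volume : Measure (Euc N)) := hdci.memLp_of_hasCompactSupport hdsupp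
      have hψ2 : MemLp ψ 2 (volume : Measure (Euc N)) :=
        hψ.continuous.memLp_of_hasCompactSupport hψc
      have int1 : Integrable (fun x => u x * fderiv ℝ ψ x (EuclideanSpace.single i 1)) :=
        l2mul hu2 hd2
      have int2 : Integrable (fun x => ε * (φ x * fderiv ℝ ψ x (EuclideanSpace.single i 1))) :=
        (l2mul hφ2 hd2).const_mul ε
      have heq1 : (fun x => vε x * fderiv ℝ ψ x (EuclideanSpace.single i 1)) =
          (fun x => u x * fderiv ℝ ψ x (EuclideanSpace.single i 1) +
            ε * (φ x * fderiv ℝ ψ x (EuclideanSpace.single i 1))) := by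
        funext x; rw [hvε]; ring
      have hIBP : ∫ x, φ x * fderiv ℝ ψ x (EuclideanSpace.single i 1) =
          - ∫ x, G x i * ψ x := by
        rw [myIBP N φ ψ hφ1 hψ hφc (EuclideanSpace.single i 1)]
        congr 1
        apply integral_congr_ae
        filter_upwards with x
        rw [hGi x i]
      have hGicont : Continuous (fun x => G x i) :=
        (EuclideanSpace.proj i : Euc N →L[ℝ] ℝ).continuous.comp hGcont
      have hGisupp : HasCompactSupport (fun x => G x i) :=
        hGsupp.comp_left (g := fun w : Euc N => w i) (by simp)
      have intg : Integrable (fun x => g x i * ψ x) :=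
        l2mul ((EuclideanSpace.proj i : Euc N →L[ℝ] ℝ).comp_memLp' hg2) hψ2
      have intG : Integrable (fun x => ε * (G x i * ψ x)) :=
        ((hGicont.mul hψ.continuous).integrable_of_hasCompactSupport
          hGisupp.mul_right).const_mul ε
      calc ∫ x, vε x * fderiv ℝ ψ x (EuclideanSpace.single i 1)
          = ∫ x, (u x * fderiv ℝ ψ x (EuclideanSpace.single i 1) +
              ε * (φ x * fderiv ℝ ψ x (EuclideanSpace.single i 1))) := by rw [heq1]
        _ = (∫ x, u x * fderiv ℝ ψ x (EuclideanSpace.single i 1)) +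
              ∫ x, ε * (φ x * fderiv ℝ ψ x (EuclideanSpace.single i 1)) :=
            integral_add int1 int2
        _ = (- ∫ x, g x i * ψ x) +
              ε * ∫ x, φ x * fderiv ℝ ψ x (EuclideanSpace.single i 1) := by
            rw [hwg ψ hψ hψc i, integral_const_mul]
        _ = (- ∫ x, g x i * ψ x) + ε * (- ∫ x, G x i * ψ x) := by rw [hIBP]
        _ = - ((∫ x, g x i * ψ x) + ∫ x, ε * (G x i * ψ x)) := by
            rw [integral_const_mul]; ring
        _ = - ∫ x, (g x i * ψ x + ε * (G x i * ψ x)) := by rw [integral_add intg intG]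
        _ = - ∫ x, hε' x i * ψ x := by
            congr 1
            apply integral_congr_ae
            filter_upwards with x
            rw [hhε]
            simp only [PiLp.add_apply, PiLp.smul_apply, smul_eq_mul]
            ring
    -- a.e. nonneg
    have hvnn : ∀ᵐ x : Euc N, 0 ≤ vε x := by
      filter_upwards with x
      by_cases hx : x ∈ tsupport φ
      · have := (hmemIcc' ε hε x hx).1
        rw [hvε]; simp only []; linarith
      · have hφx : φ x = 0 := image_eq_zero_of_notMem_tsupport hx
        rw [hvε]; simp only [hφx, mul_zero, add_zero]; exact hupos x
    -- integral = M
    have hvM : (∫ x, vε x) = M := by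
      rw [hvε]
      rw [integral_add huint (hφint.const_mul ε), integral_const_mul, hφ0, mul_zero,
        add_zero, hM]
    -- Q of competitor integrable
    have hQveq : (fun x => Q (vε x)) = fun x => Q (u x) + ΔQ ε x := by
      funext x; exact hΔeq ε hε x
    have hQvint : Integrable (fun x => Q (vε x)) := by
      rw [hQveq]; exact hQint.add (hΔint ε hε)
    -- minimality
    have hmin2 := hmin vε hε' ⟨⟨hv2, hh2, hwg'⟩, hvnn, hvM⟩ hQvint
    -- energy expansion
    have hextra : Integrable (fun x => ε * (inner ℝ (g x) (G x) : ℝ) +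
        (ε^2 * ((1/2) * ‖G x‖^2) + ΔQ ε x)) :=
      (hai.const_mul ε).add ((hbint.const_mul (ε^2)).add (hΔint ε hε))
    have hpt : (fun x => (1/2) * ‖hε' x‖^2 + Q (vε x)) =
        fun x => ((1/2) * ‖g x‖^2 + Q (u x)) +
          (ε * (inner ℝ (g x) (G x) : ℝ) + (ε^2 * ((1/2) * ‖G x‖^2) + ΔQ ε x)) := by
      funext x
      have h1 : ‖g x + ε • G x‖^2 =
          ‖g x‖^2 + 2 * (ε * (inner ℝ (g x) (G x) : ℝ)) + ε^2 * ‖G x‖^2 := by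
        rw [norm_add_sq_real, real_inner_smul_right, norm_smul, mul_pow,
          Real.norm_eq_abs, sq_abs]
      have h2 := hΔeq ε hε x
      rw [hhε, hvε]
      simp only []
      rw [h1, h2]
      ring
    have hEv : Energy N Q vε hε' = ∫ x, (((1/2) * ‖g x‖^2 + Q (u x)) +
        (ε * (inner ℝ (g x) (G x) : ℝ) + (ε^2 * ((1/2) * ‖G x‖^2) + ΔQ ε x))) := by
      rw [Energy, hpt]
    have hEu : Energy N Q u g = ∫ x, ((1/2) * ‖g x‖^2 + Q (u x)) := by rw [Energy]
    have hI0 : ∫ x, (((1/2) * ‖g x‖^2 + Q (u x)) +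
        (ε * (inner ℝ (g x) (G x) : ℝ) + (ε^2 * ((1/2) * ‖G x‖^2) + ΔQ ε x))) =
        (∫ x, ((1/2) * ‖g x‖^2 + Q (u x))) +
        ∫ x, (ε * (inner ℝ (g x) (G x) : ℝ) + (ε^2 * ((1/2) * ‖G x‖^2) + ΔQ ε x)) :=
      integral_add hE0 hextra
    have hI1 : ∫ x, (ε * (inner ℝ (g x) (G x) : ℝ) + (ε^2 * ((1/2) * ‖G x‖^2) + ΔQ ε x)) =
        (∫ x, ε * (inner ℝ (g x) (G x) : ℝ)) +
        ∫ x, (ε^2 * ((1/2) * ‖G x‖^2) + ΔQ ε x) :=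
      integral_add (hai.const_mul ε) ((hbint.const_mul (ε^2)).add (hΔint ε hε))
    have hI2 : ∫ x, (ε^2 * ((1/2) * ‖G x‖^2) + ΔQ ε x) =
        (∫ x, ε^2 * ((1/2) * ‖G x‖^2)) + ∫ x, ΔQ ε x :=
      integral_add (hbint.const_mul (ε^2)) (hΔint ε hε)
    have hI3 : (∫ x, ε * (inner ℝ (g x) (G x) : ℝ)) = ε * a := by
      rw [integral_const_mul, ha]
    have hI4 : (∫ x, ε^2 * ((1/2) * ‖G x‖^2)) = ε^2 * b := by
      rw [integral_const_mul, hb]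
    linarith [hmin2, hEv, hEu, hI0, hI1, hI2, hI3, hI4]
  -- the sequence of epsilons and dominated convergence
  have hDC : ∀ s : ℕ → ℝ, (∀ n, s n ≠ 0) → (∀ n, |s n| ≤ ε₀) →
      Tendsto s atTop (nhds 0) →
      Tendsto (fun n => (∫ x, ΔQ (s n) x) / s n) atTop (nhds c) := by
    intro s hne hle hs0
    have heq : ∀ n, (∫ x, ΔQ (s n) x) / s n = ∫ x, ΔQ (s n) x / s n := by
      intro n; rw [integral_div]
    simp only [heq]
    rw [hc]
    apply tendsto_integral_of_dominated_convergence (fun x => C₀ * |φ x|)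
    · intro n
      simpa [div_eq_mul_inv] using (hΔmeas (s n)).mul_const (s n)⁻¹
    · exact (hφcont.abs.integrable_of_hasCompactSupport hφc.abs).const_mul C₀
    · intro n
      filter_upwards with x
      rw [Real.norm_eq_abs, abs_div]
      rw [div_le_iff₀ (abs_pos.2 (hne n))]
      calc |ΔQ (s n) x| ≤ C₀ * |s n| * |φ x| := hΔbound (s n) (hle n) x
        _ = C₀ * |φ x| * |s n| := by ring
    · filter_upwards with x
      by_cases hφx : φ x = 0
      · have hz : ∀ n, ΔQ (s n) x / s n = 0 := by
          intro n
          by_cases hx : x ∈ tsupport φ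
          · rw [hΔQ]; simp [Set.indicator_of_mem hx, hφx]
          · rw [hΔQ]; simp [Set.indicator_of_notMem hx]
        simp only [hz, hφx, mul_zero]
        exact tendsto_const_nhds
      · have hx : x ∈ tsupport φ := subset_closure (by simpa [Function.mem_support] using hφx)
        have hux : δ ≤ u x := hlb x hx
        set f : ℝ → ℝ := fun t => Qt (u x + t * φ x) with hf
        have hfd : HasDerivAt f (deriv Q (u x) * φ x) 0 := by
          have hQtd' : HasDerivAt Qt (deriv Q (u x)) (u x) := hQtd (u x) (by linarith)
          have hin : HasDerivAt (fun t : ℝ => u x + t * φ x) (φ x) 0 := by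
            simpa using ((hasDerivAt_id (0:ℝ)).mul_const (φ x)).const_add (u x)
          have h5 : HasDerivAt Qt (deriv Q (u x)) (u x + 0 * φ x) := by simpa using hQtd'
          have h6 := h5.comp 0 hin
          exact h6
        have hsl := myslope f (deriv Q (u x) * φ x) hfd s hs0 hne
        apply hsl.congr
        intro n
        rw [hΔQ]
        simp only [Set.indicator_of_mem hx, hf]
        norm_num
  -- positive sequence
  set t : ℕ → ℝ := fun n => ε₀ / (n + 1) with ht
  have htpos : ∀ n, 0 < t n := fun n => div_pos hε₀ (by positivity)
  have htne : ∀ n, t n ≠ 0 := fun n => (htpos n).ne'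
  have htle : ∀ n, |t n| ≤ ε₀ := by
    intro n
    rw [abs_of_pos (htpos n)]
    have h1 : (1:ℝ) ≤ (n:ℝ) + 1 := by
      have : (0:ℝ) ≤ (n:ℝ) := Nat.cast_nonneg n
      linarith
    exact div_le_self (le_of_lt hε₀) h1
  have ht0 : Tendsto t atTop (nhds 0) := by
    have := tendsto_one_div_add_atTop_nhds_zero_nat.const_mul ε₀
    simpa [ht, div_eq_mul_inv, mul_comm, mul_one_div] using this
  have htneg : ∀ n, |(-(t n))| ≤ ε₀ := fun n => by rw [abs_neg]; exact htle n
  have htneg0 : Tendsto (fun n => -(t n)) atTop (nhds 0) := by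
    simpa using ht0.neg
  have hq1 := hDC t htne htle ht0
  have hq2 := hDC (fun n => -(t n)) (fun n => neg_ne_zero.2 (htne n)) htneg htneg0
  -- upper and lower bounds on a + c
  have hge : 0 ≤ a + c := by
    have hseq : ∀ n, 0 ≤ a + (t n * b + (∫ x, ΔQ (t n) x) / t n) := by
      intro n
      have h1 := hkey (t n) (htle n)
      have hJ : t n * ((∫ x, ΔQ (t n) x) / t n) = ∫ x, ΔQ (t n) x :=
        mul_div_cancel₀ _ (htne n)
      have h3 : 0 ≤ t n * (a + (t n * b + (∫ x, ΔQ (t n) x) / t n)) := by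
        have h4 : t n * (a + (t n * b + (∫ x, ΔQ (t n) x) / t n)) =
            t n * a + ((t n)^2 * b + t n * ((∫ x, ΔQ (t n) x) / t n)) := by ring
        rw [h4, hJ]; exact h1
      exact nonneg_of_mul_nonneg_right h3 (htpos n)
    have hlim : Tendsto (fun n => a + (t n * b + (∫ x, ΔQ (t n) x) / t n)) atTop
        (nhds (a + (0 * b + c))) :=
      tendsto_const_nhds.add ((ht0.mul tendsto_const_nhds).add hq1)
    have := ge_of_tendsto' hlim hseq
    simpa using this
  have hle2 : a + c ≤ 0 := by
    have hq2' : Tendsto (fun n => (∫ x, ΔQ (-(t n)) x) / t n) atTop (nhds (-c)) := by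
      have := hq2.neg
      refine this.congr ?_
      intro n
      rw [div_neg, neg_neg]
    have hseq : ∀ n, 0 ≤ -a + (t n * b + (∫ x, ΔQ (-(t n)) x) / t n) := by
      intro n
      have h1 := hkey (-(t n)) (htneg n)
      have hJ : t n * ((∫ x, ΔQ (-(t n)) x) / t n) = ∫ x, ΔQ (-(t n)) x :=
        mul_div_cancel₀ _ (htne n)
      have h3 : 0 ≤ t n * (-a + (t n * b + (∫ x, ΔQ (-(t n)) x) / t n)) := by
        have h4 : t n * (-a + (t n * b + (∫ x, ΔQ (-(t n)) x) / t n)) =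
            (-(t n)) * a + ((-(t n))^2 * b + t n * ((∫ x, ΔQ (-(t n)) x) / t n)) := by ring
        rw [h4, hJ]; exact h1
      exact nonneg_of_mul_nonneg_right h3 (htpos n)
    have hlim : Tendsto (fun n => -a + (t n * b + (∫ x, ΔQ (-(t n)) x) / t n)) atTop
        (nhds (-a + (0 * b + -c))) :=
      tendsto_const_nhds.add ((ht0.mul tendsto_const_nhds).add hq2')
    have := ge_of_tendsto' hlim hseq
    simp only [zero_mul, zero_add] at this
    linarith
  have : a + c = 0 := le_antisymm hle2 hge
  rw [ha, hc] at this
  exact this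


theorem exists_bump (N : ℕ) (x₀ : Euc N) (r : ℝ) (hr : 0 < r) :
    ∃ φ₀ : Euc N → ℝ, ContDiff ℝ 1 φ₀ ∧ HasCompactSupport φ₀ ∧
      tsupport φ₀ ⊆ Metric.closedBall x₀ (r/2) ∧ 0 < ∫ x, φ₀ x := by
  let f : ContDiffBump x₀ := ⟨r/4, r/2, by linarith, by linarith⟩
  exact ⟨fun x => f x, f.contDiff (n := 1), f.hasCompactSupport,
    le_of_eq f.tsupport_eq, f.integral_pos⟩

theorem grad_facts (N : ℕ) (φ : Euc N → ℝ) (hφ1 : ContDiff ℝ 1 φ) (hφc : HasCompactSupport φ) :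
    Continuous (fun x => gradient φ x) ∧ HasCompactSupport (fun x => gradient φ x) := by
  have hGdef : (fun x => gradient φ x) =
      fun x => (InnerProductSpace.toDual ℝ (Euc N)).symm (fderiv ℝ φ x) := by
    funext x; rfl
  constructor
  · rw [hGdef]
    exact (LinearIsometryEquiv.continuous _).comp (hφ1.continuous_fderiv one_ne_zero)
  · rw [hGdef]
    exact (hφc.fderiv ℝ).comp_left (by simp)

/-- Euler–Lagrange equation, weak form: a radially non-increasing minimizer `u` of `E`
in `D_M` with support the closed ball of radius `r̄` about `x₀` satisfies
`∫ ∇u·∇φ + ∫ Q'(u)·φ = λ·∫ φ` for all `φ ∈ C¹` compactly supported in `B_r̄(x₀)`. -/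
theorem stmt4 (N : ℕ) (hN : 1 ≤ N) (Q : ℝ → ℝ) (A m : ℝ) (hQ : HypHEL1 Q A m)
    (hH2 : 2 ≤ N → HypH2 N Q) (M : ℝ) (hM : 0 < M)
    (u : Euc N → ℝ) (g : Euc N → Euc N) (hmem : InD N M u g)
    (hQint : MeasureTheory.Integrable (fun x => Q (u x)))
    (hmin : ∀ v h, InD N M v h → MeasureTheory.Integrable (fun x => Q (v x)) →
      Energy N Q u g ≤ Energy N Q v h)
    (x₀ : Euc N) (hrad : IsRadialNonincreasing N u x₀)
    (r : ℝ) (hr : 0 < r) (hsupp : tsupport u = Metric.closedBall x₀ r) :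
    ∃ lam : ℝ, ∀ φ : Euc N → ℝ, ContDiff ℝ 1 φ → HasCompactSupport φ →
      tsupport φ ⊆ Metric.ball x₀ r →
      (∫ x, (inner ℝ (g x) (gradient φ x) : ℝ)) + (∫ x, deriv Q (u x) * φ x) =
        lam * ∫ x, φ x := by
  classical
  obtain ⟨v, hv_anti, hv_eq⟩ := hrad
  obtain ⟨⟨hu2, hg2, hwg⟩, hae, hMint⟩ := hmem
  obtain ⟨⟨hQc, hQ0, hQbb, hA, hm1, hlim⟩, hm3, hQd, hQdc⟩ := hQ
  -- direction vector
  have hNpos : 0 < N := hN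
  set e : Euc N := EuclideanSpace.single (⟨0, hNpos⟩ : Fin N) (1:ℝ) with he
  have hnorme : ‖e‖ = 1 := by rw [he, EuclideanSpace.norm_single]; simp
  have hpoint : ∀ s : ℝ, 0 ≤ s → ‖(x₀ + s • e) - x₀‖ = s := by
    intro s hs
    rw [add_sub_cancel_left, norm_smul, hnorme, mul_one, Real.norm_eq_abs, abs_of_nonneg hs]
  -- v is nonnegative on [0, ∞)
  have hvnn : ∀ s : ℝ, 0 ≤ s → 0 ≤ v s := by
    intro s hs
    by_contra hneg
    push_neg at hneg
    set y : Euc N := x₀ + (s + 1) • e with hy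
    have hyx : ‖y - x₀‖ = s + 1 := hpoint (s+1) (by linarith)
    have hball : Metric.ball y (1/2) ⊆ {x : Euc N | ¬ 0 ≤ u x} := by
      intro x hx
      have hd : ‖x - y‖ < 1/2 := by
        rw [← dist_eq_norm]; exact hx
      have hdx : s ≤ ‖x - x₀‖ := by
        have h1 : ‖y - x₀‖ ≤ ‖y - x‖ + ‖x - x₀‖ := by
          have := dist_triangle y x x₀
          simpa [dist_eq_norm] using this
        rw [norm_sub_rev] at hd
        rw [hyx] at h1
        linarith [hd.le]
      have h2 : u x = v ‖x - x₀‖ := hv_eq x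
      have h3 : v ‖x - x₀‖ ≤ v s := hv_anti hs (le_trans hs hdx) hdx
      simp only [Set.mem_setOf_eq, not_le]
      rw [h2]; linarith
    have hnull : volume {x : Euc N | ¬ 0 ≤ u x} = 0 := hae
    have := measure_mono_null hball hnull
    exact absurd this (Metric.measure_ball_pos volume y (by norm_num)).ne'
  have hupos : ∀ x, 0 ≤ u x := by
    intro x; rw [hv_eq x]; exact hvnn _ (norm_nonneg _)
  -- v is positive on [0, r)
  have hvpos : ∀ s : ℝ, 0 ≤ s → s < r → 0 < v s := by
    intro s hs hsr
    rcases lt_or_ge 0 (v s) with h | h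
    · exact h
    · exfalso
      have hsupp2 : Function.support u ⊆ Metric.closedBall x₀ s := by
        intro x hx
        by_contra hxball
        have hd : s < dist x x₀ := by
          simpa [Metric.mem_closedBall, not_le] using hxball
        rw [dist_eq_norm] at hd
        have h1 : v ‖x - x₀‖ ≤ v s := hv_anti hs (le_trans hs hd.le) hd.le
        have h2 : 0 ≤ v ‖x - x₀‖ := hvnn _ (norm_nonneg _)
        have h3 : u x = 0 := by rw [hv_eq x]; linarith
        exact hx h3
      have htsub : tsupport u ⊆ Metric.closedBall x₀ s :=
        closure_minimal hsupp2 Metric.isClosed_closedBall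
      set z : Euc N := x₀ + ((s + r)/2) • e with hz
      have hzx : ‖z - x₀‖ = (s + r)/2 := hpoint _ (by linarith)
      have hzmem : z ∈ tsupport u := by
        rw [hsupp]
        simp only [Metric.mem_closedBall, dist_eq_norm]
        rw [hzx]; linarith
      have := htsub hzmem
      simp only [Metric.mem_closedBall, dist_eq_norm] at this
      rw [hzx] at this
      linarith
  -- u is integrable
  have huint : Integrable u (volume : Measure (Euc N)) := by
    by_contra h
    rw [integral_undef h] at hMint
    exact hM.ne hMint
  -- upper bound
  set B : ℝ := v 0 with hB
  have hub : ∀ x, u x ≤ B := by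
    intro x
    rw [hv_eq x, hB]
    exact hv_anti (Set.mem_Ici.2 le_rfl) (norm_nonneg _) (norm_nonneg _)
  -- bump function
  obtain ⟨φ₀, hφ₀1, hφ₀c, hφ₀supp, hφ₀int_pos⟩ := exists_bump N x₀ r hr
  have hφ₀cont : Continuous φ₀ := hφ₀1.continuous
  have hφ₀intble : Integrable φ₀ (volume : Measure (Euc N)) :=
    hφ₀cont.integrable_of_hasCompactSupport hφ₀c
  set I : ℝ := ∫ x, φ₀ x with hI
  have hIne : I ≠ 0 := ne_of_gt hφ₀int_pos
  set lam : ℝ := ((∫ x, (inner ℝ (g x) (gradient φ₀ x) : ℝ)) +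
    (∫ x, deriv Q (u x) * φ₀ x)) / I with hlam
  refine ⟨lam, ?_⟩
  intro φ hφ1 hφc hφsupp
  -- a radius r' < r containing the support of φ
  obtain ⟨r', hr'0, hr'r, hr'sub⟩ : ∃ r', 0 ≤ r' ∧ r' < r ∧
      tsupport φ ⊆ Metric.closedBall x₀ r' := by
    rcases eq_empty_or_nonempty (tsupport φ) with hemp | hne
    · exact ⟨r/2, by linarith, by linarith, by rw [hemp]; exact empty_subset _⟩
    · obtain ⟨z, hz, hzmax⟩ := hφc.exists_isMaxOn hne
        ((continuous_id.dist continuous_const).continuousOn)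
      refine ⟨dist z x₀, dist_nonneg, ?_, ?_⟩
      · have := hφsupp hz
        simpa [Metric.mem_ball] using this
      · intro y hy
        exact hzmax hy
  set ρ : ℝ := max r' (r/2) with hρ
  have hρ0 : 0 ≤ ρ := le_trans hr'0 (le_max_left _ _)
  have hρr : ρ < r := max_lt hr'r (by linarith)
  set δ : ℝ := v ρ with hδdef
  have hδ : 0 < δ := hvpos ρ hρ0 hρr
  have hδB : δ ≤ B := hv_anti (Set.mem_Ici.2 le_rfl) hρ0 hρ0
  have hsub2 : tsupport φ ⊆ Metric.closedBall x₀ ρ :=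
    hr'sub.trans (Metric.closedBall_subset_closedBall (le_max_left _ _))
  have hsub0 : tsupport φ₀ ⊆ Metric.closedBall x₀ ρ :=
    hφ₀supp.trans (Metric.closedBall_subset_closedBall (le_max_right _ _))
  have hlbgen : ∀ x ∈ Metric.closedBall x₀ ρ, δ ≤ u x := by
    intro x hx
    rw [hv_eq x, hδdef]
    simp only [Metric.mem_closedBall, dist_eq_norm] at hx
    exact hv_anti (norm_nonneg _) hρ0 hx
  -- the zero-mean combination
  set c : ℝ := (∫ x, φ x) / I with hcdef
  set ψ : Euc N → ℝ := fun x => φ x - c * φ₀ x with hψ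
  have hψ1 : ContDiff ℝ 1 ψ := hφ1.sub (contDiff_const.mul hφ₀1)
  have hψsub : tsupport ψ ⊆ tsupport φ ∪ tsupport φ₀ := by
    apply closure_minimal ?_ ((isClosed_tsupport φ).union (isClosed_tsupport φ₀))
    intro x hx
    have hψx : ψ x ≠ 0 := hx
    by_cases h1 : φ x = 0
    · refine Or.inr (subset_closure ?_)
      simp only [Function.mem_support]
      intro h0
      exact hψx (by rw [hψ]; simp [h1, h0])
    · exact Or.inl (subset_closure h1)
  have hψc : HasCompactSupport ψ :=
    IsCompact.of_isClosed_subset (hφc.union hφ₀c) (isClosed_tsupport ψ) hψsub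
  have hψlb : ∀ x ∈ tsupport ψ, δ ≤ u x := by
    intro x hx
    rcases hψsub hx with h | h
    · exact hlbgen x (hsub2 h)
    · exact hlbgen x (hsub0 h)
  have hψ0 : (∫ x, ψ x) = 0 := by
    rw [hψ]
    rw [integral_sub (hφ1.continuous.integrable_of_hasCompactSupport hφc)
      (hφ₀intble.const_mul c), integral_const_mul]
    rw [hcdef]
    field_simp
    rw [← hI]; ring
  have hcore := core N Q M u g hQd hQdc hQc hu2 hg2 hwg hae hupos huint hMint hQint hmin
    δ B hδ hδB hub ψ hψ1 hψc hψlb hψ0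
  -- gradient linearity
  have hgradψ : ∀ x, gradient ψ x = gradient φ x - c • gradient φ₀ x := by
    intro x
    have hdφ : DifferentiableAt ℝ φ x := (hφ1.differentiable one_ne_zero) x
    have hdφ₀ : DifferentiableAt ℝ φ₀ x := (hφ₀1.differentiable one_ne_zero) x
    have h1 : gradient ψ x = (InnerProductSpace.toDual ℝ (Euc N)).symm (fderiv ℝ ψ x) := rfl
    have h2 : gradient φ x = (InnerProductSpace.toDual ℝ (Euc N)).symm (fderiv ℝ φ x) := rfl
    have h3 : gradient φ₀ x = (InnerProductSpace.toDual ℝ (Euc N)).symm (fderiv ℝ φ₀ x) := rfl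
    rw [h1, h2, h3, hψ]
    rw [fderiv_fun_sub hdφ (hdφ₀.const_mul c), fderiv_const_mul hdφ₀ c, map_sub, LinearIsometryEquiv.map_smul]
  -- gradient memLp facts
  obtain ⟨hgφcont, hgφsupp⟩ := grad_facts N φ hφ1 hφc
  obtain ⟨hgφ₀cont, hgφ₀supp⟩ := grad_facts N φ₀ hφ₀1 hφ₀c
  have hgφ2 : MemLp (fun x => gradient φ x) 2 (volume : Measure (Euc N)) :=
    hgφcont.memLp_of_hasCompactSupport hgφsupp
  have hgφ₀2 : MemLp (fun x => gradient φ₀ x) 2 (volume : Measure (Euc N)) :=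
    hgφ₀cont.memLp_of_hasCompactSupport hgφ₀supp
  have hint1 : Integrable (fun x => (inner ℝ (g x) (gradient φ x) : ℝ)) := l2inner hg2 hgφ2
  have hint2 : Integrable (fun x => c * (inner ℝ (g x) (gradient φ₀ x) : ℝ)) :=
    (l2inner hg2 hgφ₀2).const_mul c
  have hTgrad : (∫ x, (inner ℝ (g x) (gradient ψ x) : ℝ)) =
      (∫ x, (inner ℝ (g x) (gradient φ x) : ℝ)) -
        c * ∫ x, (inner ℝ (g x) (gradient φ₀ x) : ℝ) := by
    have hpt : (fun x => (inner ℝ (g x) (gradient ψ x) : ℝ)) =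
        fun x => (inner ℝ (g x) (gradient φ x) : ℝ) -
          c * (inner ℝ (g x) (gradient φ₀ x) : ℝ) := by
      funext x
      rw [hgradψ x, inner_sub_right, real_inner_smul_right]
    rw [hpt, integral_sub hint1 hint2, integral_const_mul]
  -- Q' linearity
  have hlbφ : ∀ x ∈ tsupport φ, δ ≤ u x := fun x hx => hlbgen x (hsub2 hx)
  have hlbφ₀ : ∀ x ∈ tsupport φ₀, δ ≤ u x := fun x hx => hlbgen x (hsub0 hx)
  have hintQ1 : Integrable (fun x => deriv Q (u x) * φ x) :=
    derivQ_mul_integrable hQdc hu2.1 hδ hδB hub hφ1.continuous hφc hlbφ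
  have hintQ2 : Integrable (fun x => c * (deriv Q (u x) * φ₀ x)) :=
    (derivQ_mul_integrable hQdc hu2.1 hδ hδB hub hφ₀cont hφ₀c hlbφ₀).const_mul c
  have hTQ : (∫ x, deriv Q (u x) * ψ x) =
      (∫ x, deriv Q (u x) * φ x) - c * ∫ x, deriv Q (u x) * φ₀ x := by
    have hpt : (fun x => deriv Q (u x) * ψ x) =
        fun x => deriv Q (u x) * φ x - c * (deriv Q (u x) * φ₀ x) := by
      funext x; rw [hψ]; ring
    rw [hpt, integral_sub hintQ1 hintQ2, integral_const_mul]
  rw [hTgrad, hTQ] at hcore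
  rw [hlam, hcdef] at *
  have hfinal : (∫ x, (inner ℝ (g x) (gradient φ x) : ℝ)) + (∫ x, deriv Q (u x) * φ x) =
      ((∫ x, φ x) / I) * ((∫ x, (inner ℝ (g x) (gradient φ₀ x) : ℝ)) +
        (∫ x, deriv Q (u x) * φ₀ x)) := by linarith
  rw [hfinal]
  field_simp
end
end
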